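/- In the Post-Boundary strategy, let G̃ be the No-Boundary overlay graph of G (satisfying d_{G̃}(b_1,b_2) = d_G(b_1,b_2) for boundary pairs by Theorem 1), and form G'_i from the induced subgraph G_i by inserting edges (b_1, b_2) of weight d_{G̃}(b_1, b_2) for all b_1, b_2 ∈ B_i. Then for all s, t ∈ G_i, d_{G'_i}(s, t) = d_G(s, t). -/

import Mathlib

open scoped ENNReal Classical

namespace PSP

/-- A weighted undirected graph: symmetric adjacency and a weight function
with values in `ℝ≥0∞` (so weights are non-negative). -/
structure WGraph (V : Type*) where
  Adj : V → V → Prop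
  symm : ∀ {u v}, Adj u v → Adj v u
  w : V → V → ℝ≥0∞

variable {V : Type*} {ι : Type*}

/-- Sum of `f` over consecutive pairs of a list. -/
noncomputable def pairSum (f : V → V → ℝ≥0∞) : List V → ℝ≥0∞
  | a :: b :: rest => f a b + pairSum f (b :: rest)
  | _ => 0

/-- Weighted length of a walk (given as a list of vertices). -/
noncomputable def wlen (G : WGraph V) (l : List V) : ℝ≥0∞ := pairSum G.w l

/-- `l` is a walk in `G` from `s` to `t`: consecutive vertices are adjacent,
the first vertex is `s` and the last is `t`. -/
def IsWalk (G : WGraph V) (s t : V) (l : List V) : Prop :=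
  l.Chain' G.Adj ∧ l.head? = some s ∧ l.getLast? = some t

/-- Shortest-path distance in `G` (`⊤` if no walk exists). -/
noncomputable def dist (G : WGraph V) (s t : V) : ℝ≥0∞ :=
  sInf {x | ∃ l, IsWalk G s t l ∧ wlen G l = x}

/-- Induced subgraph on a vertex set `S`. -/
def induce (G : WGraph V) (S : Set V) : WGraph V where
  Adj u v := G.Adj u v ∧ u ∈ S ∧ v ∈ S
  symm h := ⟨G.symm h.1, h.2.2, h.2.1⟩
  w := G.w

/-- A partition of the vertex set is given by a function `P : V → ι`
assigning each vertex its partition index. The set of all boundary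
vertices: vertices having a neighbor in another partition. -/
def bdry (G : WGraph V) (P : V → ι) : Set V :=
  {v | ∃ u, G.Adj v u ∧ P u ≠ P v}

/-- Boundary vertices of partition `i`. -/
def bdryIn (G : WGraph V) (P : V → ι) (i : ι) : Set V :=
  {v | P v = i ∧ ∃ u, G.Adj v u ∧ P u ≠ i}

/-- The induced subgraph `G_i` of partition `i`. -/
def partGraph (G : WGraph V) (P : V → ι) (i : ι) : WGraph V :=
  induce G {x | P x = i}

/-- The No-Boundary overlay graph `G̃`: vertices are boundary vertices; for each
partition, each boundary pair gets an edge of weight equal to the *local*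
partition distance; inter-partition edges of `G` keep their original weight. -/
noncomputable def overlay (G : WGraph V) (P : V → ι) : WGraph V where
  Adj u v := (P u = P v ∧ u ∈ bdry G P ∧ v ∈ bdry G P) ∨ (P u ≠ P v ∧ G.Adj u v)
  symm := by
    rintro u v (⟨h1, h2, h3⟩ | ⟨h1, h2⟩)
    · exact Or.inl ⟨h1.symm, h3, h2⟩
    · exact Or.inr ⟨fun h => h1 h.symm, G.symm h2⟩
  w u v := if P u = P v then dist (partGraph G P (P u)) u v else G.w u v

/-- A half-connected boundary vertex: has a non-boundary neighbor in its own partition. -/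
def halfC (G : WGraph V) (P : V → ι) (b : V) : Prop :=
  b ∈ bdry G P ∧ ∃ u, G.Adj b u ∧ P u = P b ∧ u ∉ bdry G P

/-- A full-connected boundary vertex: all in-partition neighbors are boundary vertices. -/
def fullC (G : WGraph V) (P : V → ι) (b : V) : Prop :=
  b ∈ bdry G P ∧ ∀ u, G.Adj b u → P u = P b → u ∈ bdry G P

/-- The pruned overlay graph `G̃'`, with inserted boundary-pair weights `ω`:
edges among half-connected boundary pairs of the same partition (weight `ω`),
all inter-partition edges, and the original in-partition adjacent edges of
full-connected boundary vertices. -/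
noncomputable def pruned (G : WGraph V) (P : V → ι) (ω : V → V → ℝ≥0∞) : WGraph V where
  Adj u v :=
    (P u = P v ∧ halfC G P u ∧ halfC G P v) ∨
    (P u ≠ P v ∧ G.Adj u v) ∨
    (P u = P v ∧ G.Adj u v ∧ u ∈ bdry G P ∧ v ∈ bdry G P ∧ (fullC G P u ∨ fullC G P v))
  symm := by
    rintro u v (⟨h1, h2, h3⟩ | ⟨h1, h2⟩ | ⟨h1, h2, h3, h4, h5⟩)
    · exact Or.inl ⟨h1.symm, h3, h2⟩
    · exact Or.inr (Or.inl ⟨fun h => h1 h.symm, G.symm h2⟩)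
    · exact Or.inr (Or.inr ⟨h1.symm, G.symm h2, h4, h3, h5.symm⟩)
  w u v := if P u = P v ∧ halfC G P u ∧ halfC G P v then ω u v else G.w u v

/-- The augmented partition graph `G'_i`: the induced subgraph `G_i` plus, for each
boundary pair `b₁ b₂ ∈ B_i`, an inserted edge of weight `ω b₁ b₂` (taking the
minimum with an already-existing edge weight). -/
noncomputable def augment (G : WGraph V) (P : V → ι) (i : ι) (ω : V → V → ℝ≥0∞) : WGraph V where
  Adj u v := (G.Adj u v ∧ P u = i ∧ P v = i) ∨ (u ∈ bdryIn G P i ∧ v ∈ bdryIn G P i)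
  symm := by
    rintro u v (⟨h1, h2, h3⟩ | ⟨h1, h2⟩)
    · exact Or.inl ⟨G.symm h1, h3, h2⟩
    · exact Or.inr ⟨h2, h1⟩
  w u v :=
    if u ∈ bdryIn G P i ∧ v ∈ bdryIn G P i then
      (if G.Adj u v ∧ P u = i ∧ P v = i then min (ω u v) (G.w u v) else ω u v)
    else G.w u v

/-- Graph obtained from `G` by adding, for every pair `u v ∈ S`, a shortcut edge
of weight `dist G u v` (taking the minimum with an already-existing edge weight). -/
noncomputable def shortcut (G : WGraph V) (S : Set V) : WGraph V where
  Adj u v := G.Adj u v ∨ (u ∈ S ∧ v ∈ S)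
  symm := by
    rintro u v (h | ⟨h1, h2⟩)
    · exact Or.inl (G.symm h)
    · exact Or.inr ⟨h2, h1⟩
  w u v :=
    if u ∈ S ∧ v ∈ S then
      (if G.Adj u v then min (dist G u v) (G.w u v) else dist G u v)
    else G.w u v

/-- Vertex-splitting construction: each cut vertex `x ∈ X` keeps its neighbors in
group `N x 0`; for `1 ≤ i ≤ l x` a duplicate `(x, i)` is created, connected to the
vertices of `N x i` with the original weights and to `x` by a zero-weight edge. -/
noncomputable def split (G : WGraph V) (X : Set V) (N : V → ℕ → Set V) (l : V → ℕ) :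
    WGraph (V ⊕ V × ℕ) where
  Adj a b := match a, b with
    | .inl u, .inl v => G.Adj u v ∧ (u ∈ X → v ∈ N u 0) ∧ (v ∈ X → u ∈ N v 0)
    | .inl v, .inr (x, i) => x ∈ X ∧ 1 ≤ i ∧ i ≤ l x ∧ ((G.Adj x v ∧ v ∈ N x i) ∨ v = x)
    | .inr (x, i), .inl v => x ∈ X ∧ 1 ≤ i ∧ i ≤ l x ∧ ((G.Adj x v ∧ v ∈ N x i) ∨ v = x)
    | .inr _, .inr _ => False
  symm := by
    rintro (u | ⟨x, i⟩) (v | ⟨y, j⟩) h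
    · exact ⟨G.symm h.1, h.2.2, h.2.1⟩
    · exact h
    · exact h
    · exact h.elim
  w a b := match a, b with
    | .inl u, .inl v => G.w u v
    | .inl v, .inr (x, _) => if v = x then 0 else G.w x v
    | .inr (x, _), .inl v => if v = x then 0 else G.w x v
    | .inr _, .inr _ => 0

/-! Walks leaving a vertex set `S` of `G` can only do so through the inner boundary of `S`.
So if `H` contains the edges of `G` inside `S` and realises the `G`-distance between any two
inner boundary vertices, then every excursion of a `G`-walk outside `S` is shortcut in `H`, and
`H` is no longer than `G` between vertices of `S`. For the augmented partition graph both
conditions come from the overlay distances agreeing with `G`-distances; conversely, no edge of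
the augmented graph is shorter than the `G`-distance between its endpoints. -/

section Walks

variable {G : WGraph V}

theorem IsWalk.cons {a b t : V} {l : List V} (hab : G.Adj a b) (h : IsWalk G b t (b :: l)) :
    IsWalk G a t (a :: b :: l) :=
  ⟨List.isChain_cons_cons.mpr ⟨hab, h.1⟩, rfl, by rw [List.getLast?_cons_cons]; exact h.2.2⟩

@[elab_as_elim]
theorem IsWalk.induction {t : V} {motive : V → List V → Prop} {s : V} {l : List V}
    (h : IsWalk G s t l) (single : motive t [t])
    (cons : ∀ a b l, G.Adj a b → IsWalk G b t (b :: l) → motive b (b :: l) →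
      motive a (a :: b :: l)) :
    motive s l := by
  induction l generalizing s with
  | nil => simp [IsWalk] at h
  | cons a l ih =>
    obtain ⟨hc, hh, hg⟩ := h
    obtain rfl : a = s := by simpa using hh
    cases l with
    | nil =>
      obtain rfl : a = t := by simpa using hg
      exact single
    | cons b l =>
      have hb : IsWalk G b t (b :: l) :=
        ⟨(List.isChain_cons_cons.mp hc).2, rfl, by rwa [List.getLast?_cons_cons] at hg⟩
      exact cons a b l (List.isChain_cons_cons.mp hc).1 hb (ih hb)

theorem wlen_cons_cons (a b : V) (l : List V) :
    wlen G (a :: b :: l) = G.w a b + wlen G (b :: l) :=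
  rfl

theorem IsWalk.append {s u t : V} {l₁ l₂ : List V} (h₁ : IsWalk G s u l₁)
    (h₂ : IsWalk G u t l₂) :
    IsWalk G s t (l₁ ++ l₂.tail) ∧ wlen G (l₁ ++ l₂.tail) = wlen G l₁ + wlen G l₂ := by
  refine h₁.induction ?_ ?_
  · obtain ⟨m, rfl⟩ : ∃ m, l₂ = u :: m := by
      obtain ⟨-, hh, -⟩ := h₂
      cases l₂ with
      | nil => simp at hh
      | cons a m => exact ⟨m, by simpa using hh⟩
    simp [h₂, wlen, pairSum]
  · intro a b l hab _ ih
    refine ⟨IsWalk.cons hab ih.1, ?_⟩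
    rw [List.cons_append, List.cons_append, wlen_cons_cons, ← List.cons_append, ih.2,
      wlen_cons_cons, add_assoc]

theorem dist_le_wlen {s t : V} {l : List V} (h : IsWalk G s t l) : dist G s t ≤ wlen G l :=
  sInf_le ⟨l, h, rfl⟩

theorem dist_self (s : V) : dist G s s = 0 :=
  nonpos_iff_eq_zero.mp (dist_le_wlen (l := [s]) ⟨List.isChain_singleton s, rfl, rfl⟩)

theorem dist_le_weight {u v : V} (h : G.Adj u v) : dist G u v ≤ G.w u v := by
  simpa [wlen, pairSum] using dist_le_wlen (l := [u, v]) ⟨List.isChain_pair.mpr h, rfl, rfl⟩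

theorem dist_eq_iInf (s t : V) : dist G s t = ⨅ (l) (_ : IsWalk G s t l), wlen G l :=
  sInf_image

theorem dist_triangle (s u t : V) : dist G s t ≤ dist G s u + dist G u t := by
  rw [dist_eq_iInf s u, dist_eq_iInf u t]
  refine ENNReal.le_iInf_add_iInf fun l₁ l₂ => ENNReal.le_iInf_add_iInf fun h₁ h₂ => ?_
  obtain ⟨h, hlen⟩ := h₁.append h₂
  exact hlen ▸ dist_le_wlen h

theorem dist_le_weight_add {a b t : V} (hab : G.Adj a b) :
    dist G a t ≤ G.w a b + dist G b t :=
  (dist_triangle a b t).trans (add_le_add_left (dist_le_weight hab) _)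

theorem dist_le_dist_of_dist_le_weight {H : WGraph V}
    (h : ∀ u v, H.Adj u v → dist G u v ≤ H.w u v) (s t : V) : dist G s t ≤ dist H s t := by
  refine le_sInf ?_
  rintro _ ⟨l, hl, rfl⟩
  refine hl.induction (by simp [dist_self]) fun a b l hab _ ih => ?_
  calc dist G a t ≤ dist G a b + dist G b t := dist_triangle a b t
    _ ≤ H.w a b + wlen H (b :: l) := add_le_add (h a b hab) ih

end Walks

section Shortcuts

def innerBoundary (G : WGraph V) (S : Set V) : Set V :=
  {v | v ∈ S ∧ ∃ u, G.Adj v u ∧ u ∉ S}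

variable {G H : WGraph V} {S : Set V}
  (hedge : ∀ u v, G.Adj u v → u ∈ S → v ∈ S → dist H u v ≤ G.w u v)
  (hbdry : ∀ u ∈ innerBoundary G S, ∀ v ∈ innerBoundary G S, dist H u v ≤ dist G u v)
include hedge hbdry

/-- Induction invariant: from a vertex outside `S`, the walk pays for a `G`-path to the vertex `w`
where it first re-enters `S`, followed by an `H`-path from `w` on. -/
theorem IsWalk.dist_le_of_shortcuts {t u : V} {l : List V} (ht : t ∈ S) (hl : IsWalk G u t l) :
    (u ∈ S → dist H u t ≤ wlen G l) ∧
      (u ∉ S → ∃ w ∈ innerBoundary G S, dist G u w + dist H w t ≤ wlen G l) := by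
  refine hl.induction ⟨fun _ => by simp [dist_self], fun h => absurd ht h⟩ ?_
  rintro a b l hab - ⟨ihS, ihN⟩
  rw [wlen_cons_cons]
  constructor
  · intro ha
    by_cases hb : b ∈ S
    · calc dist H a t ≤ dist H a b + dist H b t := dist_triangle a b t
        _ ≤ G.w a b + wlen G (b :: l) := add_le_add (hedge a b hab ha hb) (ihS hb)
    · obtain ⟨w, hw, hwt⟩ := ihN hb
      calc dist H a t ≤ dist H a w + dist H w t := dist_triangle a w t
        _ ≤ dist G a w + dist H w t := add_le_add_left (hbdry a ⟨ha, b, hab, hb⟩ w hw) _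
        _ ≤ G.w a b + dist G b w + dist H w t := add_le_add_left (dist_le_weight_add hab) _
        _ ≤ G.w a b + wlen G (b :: l) := by rw [add_assoc]; gcongr
  · intro ha
    by_cases hb : b ∈ S
    · exact ⟨b, ⟨hb, a, G.symm hab, ha⟩, add_le_add (dist_le_weight hab) (ihS hb)⟩
    · obtain ⟨w, hw, hwt⟩ := ihN hb
      refine ⟨w, hw, ?_⟩
      calc dist G a w + dist H w t ≤ G.w a b + dist G b w + dist H w t :=
            add_le_add_left (dist_le_weight_add hab) _
        _ ≤ G.w a b + wlen G (b :: l) := by rw [add_assoc]; gcongr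

theorem dist_le_dist_of_shortcuts {s t : V} (hs : s ∈ S) (ht : t ∈ S) :
    dist H s t ≤ dist G s t := by
  refine le_sInf ?_
  rintro _ ⟨l, hl, rfl⟩
  exact (hl.dist_le_of_shortcuts hedge hbdry ht).1 hs

end Shortcuts

theorem bdryIn_subset_bdry (G : WGraph V) (P : V → ι) (i : ι) : bdryIn G P i ⊆ bdry G P := by
  rintro v ⟨rfl, u, hadj, hu⟩
  exact ⟨u, hadj, hu⟩

section Augment

variable {G : WGraph V} {P : V → ι} {i : ι} {ω : V → V → ℝ≥0∞}

theorem augment_w_le_w {u v : V} (h : G.Adj u v) (hu : P u = i) (hv : P v = i) :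
    (augment G P i ω).w u v ≤ G.w u v := by
  dsimp only [augment]
  split_ifs with hb hG
  · exact min_le_right _ _
  · exact absurd ⟨h, hu, hv⟩ hG
  · exact le_rfl

theorem augment_w_le {u v : V} (hu : u ∈ bdryIn G P i) (hv : v ∈ bdryIn G P i) :
    (augment G P i ω).w u v ≤ ω u v := by
  dsimp only [augment]
  rw [if_pos ⟨hu, hv⟩]
  split_ifs
  · exact min_le_left _ _
  · exact le_rfl

theorem dist_augment_le_dist (hω : ∀ u ∈ bdryIn G P i, ∀ v ∈ bdryIn G P i, ω u v ≤ dist G u v)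
    {s t : V} (hs : P s = i) (ht : P t = i) :
    dist (augment G P i ω) s t ≤ dist G s t :=
  dist_le_dist_of_shortcuts (S := {x | P x = i})
    (fun _ _ h hu hv => (dist_le_weight (Or.inl ⟨h, hu, hv⟩)).trans (augment_w_le_w h hu hv))
    (fun u hu v hv => (dist_le_weight (Or.inr ⟨hu, hv⟩)).trans
      ((augment_w_le hu hv).trans (hω u hu v hv)))
    hs ht

theorem dist_le_dist_augment (hω : ∀ u ∈ bdryIn G P i, ∀ v ∈ bdryIn G P i, dist G u v ≤ ω u v)
    (s t : V) : dist G s t ≤ dist (augment G P i ω) s t := by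
  refine dist_le_dist_of_dist_le_weight (fun u v hadj => ?_) s t
  dsimp only [augment]
  split_ifs with hb hG
  · exact le_min (hω u hb.1 v hb.2) (dist_le_weight hG.1)
  · exact hω u hb.1 v hb.2
  · rcases hadj with ⟨h, -, -⟩ | hb'
    · exact dist_le_weight h
    · exact absurd hb' hb

end Augment

/-- Post-Boundary correctness: the partition graph augmented with
overlay boundary-pair distances answers every same-partition query exactly. -/
theorem stmt18 {V ι : Type*} (G : WGraph V) (P : V → ι) (i : ι)
    (hov : ∀ b1 ∈ bdry G P, ∀ b2 ∈ bdry G P,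
      dist (overlay G P) b1 b2 = dist G b1 b2) :
    ∀ s t : V, P s = i → P t = i →
      dist (augment G P i (dist (overlay G P))) s t = dist G s t := by
  have hov' : ∀ u ∈ bdryIn G P i, ∀ v ∈ bdryIn G P i, dist (overlay G P) u v = dist G u v :=
    fun u hu v hv => hov u (bdryIn_subset_bdry G P i hu) v (bdryIn_subset_bdry G P i hv)
  intro s t hs ht
  exact le_antisymm (dist_augment_le_dist (fun u hu v hv => (hov' u hu v hv).le) hs ht)
    (dist_le_dist_augment (fun u hu v hv => (hov' u hu v hv).ge) s t)

end PSP
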